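/- arXiv:2502.14582 — 3 statements merged into one kernel-verified Lean document; each statement's English description precedes it below -/
import Mathlib

section
/- Let A be a finite abelian group of order n that is not an elementary abelian 2-group, let D(A) = ⟨x, A : x² = 1, xax = a⁻¹ for all a ∈ A⟩ be the generalized dihedral group, and consider the transitive degree-n action of G = D(A) on the left cosets of H = ⟨x⟩. Then the independence number of the derangement graph Γ_G equals 2 = |G|/n (so G has the EKR property), and there exist two distinct cosets u ≠ v such that exactly one derangement of G maps u to v. -/
/-- The Cayley graph of a group `Γ` with (inverse-closed) connection set `C`:
`g` and `h` are adjacent iff they are distinct and `g⁻¹ * h ∈ C` (symmetrized). -/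
def cayley (Γ : Type*) [Group Γ] (C : Set Γ) : SimpleGraph Γ where
  Adj g h := g ≠ h ∧ g⁻¹ * h ∈ C ∧ h⁻¹ * g ∈ C
  symm := ⟨fun _ _ ⟨hne, h1, h2⟩ => ⟨hne.symm, h2, h1⟩⟩
  loopless := ⟨fun _ ⟨hne, _⟩ => hne rfl⟩

/-- A set of vertices of a graph is independent if its elements are pairwise non-adjacent. -/
def IsIndepSet {V : Type*} (X : SimpleGraph V) (s : Set V) : Prop :=
  s.Pairwise fun a b => ¬ X.Adj a b

/-- The independence number of a graph: the maximum size of an independent set. -/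
noncomputable def indepNum {V : Type*} (X : SimpleGraph V) : ℕ :=
  sSup {k | ∃ s : Finset V, IsIndepSet X ↑s ∧ s.card = k}

/-- The set of derangements of a permutation group `G ≤ Sym(n)`: the elements of `G`
fixing no point of `{1,…,n}`. -/
def der {n : ℕ} (G : Subgroup (Equiv.Perm (Fin n))) : Set G :=
  {σ : G | ∀ i : Fin n, (σ : Equiv.Perm (Fin n)) i ≠ i}
/-- The set of derangements of the action of `G` on the left cosets of `H`:
the elements of `G` fixing no coset. -/
def derQ (G : Type*) [Group G] (H : Subgroup G) : Set G :=
  {g : G | ∀ c : G ⧸ H, g • c ≠ c}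

/-!
A coset `cH` is fixed by `g` iff `c⁻¹gc ∈ H`, so the non-derangements are the conjugates of
elements of `H = ⟨x⟩ = {1, x}`. The index-two subgroup `A` is normal and meets `H` trivially,
so every nontrivial element of `A` is a derangement: two distinct vertices of `Γ_G` in the same
coset of `A` are adjacent, and an independent set meets each of the two cosets of `A` at most
once. The stabiliser `H` itself is independent, whence `α(Γ_G) = 2`.

For the last claim pick `a ∈ A` with `a² ≠ 1`. The elements taking `H` to `a²H` are `a²` and
`a²x = a x a⁻¹`; the first is a derangement and the second, a conjugate of `x`, is not.
-/

open Subgroup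

section Derangements

variable {G : Type*} [Group G] {H : Subgroup G}

theorem mem_derQ_iff {g : G} : g ∈ derQ G H ↔ ∀ c : G, c⁻¹ * g * c ∉ H := by
  simp only [derQ, Set.mem_ofPred_eq, QuotientGroup.mk_surjective.forall]
  refine forall_congr' fun c => not_congr ?_
  rw [MulAction.Quotient.smul_coe, smul_eq_mul, QuotientGroup.eq, ← H.inv_mem_iff]
  simp only [mul_inv_rev, inv_inv, mul_assoc]

theorem conj_notMem_derQ {h : G} (hh : h ∈ H) (c : G) : c * h * c⁻¹ ∉ derQ G H := by
  rw [mem_derQ_iff]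
  exact fun hd => hd c (by simpa [mul_assoc] using hh)

theorem mem_derQ_of_mem_of_disjoint {N : Subgroup G} [N.Normal] (hNH : Disjoint N H)
    {g : G} (hg : g ∈ N) (hg1 : g ≠ 1) : g ∈ derQ G H := by
  rw [mem_derQ_iff]
  intro c hc
  have hcN : c⁻¹ * g * c ∈ N := by simpa using Normal.conj_mem ‹_› g hg c⁻¹
  have hconj1 : c⁻¹ * g * c = 1 := disjoint_def.mp hNH hcN hc
  exact hg1 (by simpa [mul_assoc] using congrArg (fun y => c * y * c⁻¹) hconj1)

theorem isIndepSet_derQ_of_subset {s : Set G} (hs : s ⊆ H) :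
    IsIndepSet (cayley G (derQ G H)) s := by
  rintro g hg h hh - ⟨-, hgh, -⟩
  exact conj_notMem_derQ (H.mul_mem (H.inv_mem (hs hg)) (hs hh)) 1 (by simpa using hgh)

end Derangements

section Independence

variable {G : Type*} [Group G] {C : Set G} {N : Subgroup G}

theorem cayley_adj_of_inv_mul_mem (hN : ∀ a ∈ N, a ≠ 1 → a ∈ C) {g h : G} (hgh : g ≠ h)
    (hmem : g⁻¹ * h ∈ N) : (cayley G C).Adj g h := by
  refine ⟨hgh, hN _ hmem ?_, hN _ (by simpa using N.inv_mem hmem) ?_⟩ <;>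
    simp only [ne_eq, inv_mul_eq_one] <;> tauto

theorem card_le_index_of_isIndepSet [N.FiniteIndex] (hN : ∀ a ∈ N, a ≠ 1 → a ∈ C)
    {s : Finset G} (hs : IsIndepSet (cayley G C) s) : s.card ≤ N.index := by
  classical
  have : Fintype (G ⧸ N) := Fintype.ofFinite _
  rw [index, Nat.card_eq_fintype_card, ← Finset.card_univ]
  refine Finset.card_le_card_of_injOn QuotientGroup.mk (fun _ _ => Finset.mem_univ _) ?_
  intro g hg h hh hq
  by_contra hgh
  exact hs hg hh hgh (cayley_adj_of_inv_mul_mem hN hgh (QuotientGroup.eq.mp hq))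

theorem indepNum_eq_of_isIndepSet {V : Type*} {X : SimpleGraph V} {s : Finset V} {k : ℕ}
    (hs : IsIndepSet X s) (hcard : s.card = k)
    (hle : ∀ t : Finset V, IsIndepSet X t → t.card ≤ k) : indepNum X = k := by
  have hub : k ∈ upperBounds {k | ∃ s : Finset V, IsIndepSet X s ∧ s.card = k} := by
    rintro _ ⟨t, ht, rfl⟩
    exact hle t ht
  exact le_antisymm (csSup_le ⟨k, s, hs, hcard⟩ hub) (le_csSup ⟨k, hub⟩ ⟨s, hs, hcard⟩)

end Independence

section Involution

variable {G : Type*} [Group G] {x : G}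

theorem eq_one_or_eq_of_mem_zpowers (hx : x ^ 2 = 1) {g : G} (hg : g ∈ zpowers x) :
    g = 1 ∨ g = x := by
  obtain ⟨k, rfl⟩ := hg
  rcases Int.even_or_odd' k with ⟨m, rfl | rfl⟩
  · simp [zpow_mul, hx]
  · simp [zpow_add, zpow_mul, hx]

theorem conj_eq_sq_mul_of_mul_mul_eq_inv (hx : x ^ 2 = 1) {a : G} (hax : x * a * x = a⁻¹) :
    a * x * a⁻¹ = a ^ 2 * x := by
  rw [← hax, sq]
  simp only [← mul_assoc]
  rw [mul_assoc a x x, ← sq, hx, mul_one]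

theorem existsUnique_mem_derQ_smul_eq (hx : x ^ 2 = 1) {a : G} (hax : x * a * x = a⁻¹)
    (ha : a ^ 2 ∈ derQ G (zpowers x)) :
    ∃! g : G, g ∈ derQ G (zpowers x) ∧ g • ((1 : G) : G ⧸ zpowers x) = (a ^ 2 : G) := by
  refine ⟨a ^ 2, ⟨ha, by rw [MulAction.Quotient.smul_coe, smul_eq_mul, mul_one]⟩, ?_⟩
  rintro g ⟨hg, hgu⟩
  rw [MulAction.Quotient.smul_coe, smul_eq_mul, mul_one, QuotientGroup.eq] at hgu
  rcases eq_one_or_eq_of_mem_zpowers hx hgu with h | h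
  · exact inv_mul_eq_one.mp h
  · refine absurd hg ?_
    have hxinv : x⁻¹ = x := inv_eq_of_mul_eq_one_right (by rw [← pow_two, hx])
    have hg' : g = a * x * a⁻¹ := by
      rw [conj_eq_sq_mul_of_mul_mul_eq_inv hx hax, ← hxinv, ← h]
      group
    exact hg' ▸ conj_notMem_derQ (mem_zpowers x) a

end Involution

theorem stmt_8_general {G : Type*} [Group G]
    (A : Subgroup G)
    (hA2 : ∃ a ∈ A, a ^ 2 ≠ 1)
    (x : G) (hx2 : x ^ 2 = 1) (hxA : x ∉ A) (hindex : A.index = 2)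
    (hconj : ∀ a ∈ A, x * a * x = a⁻¹) :
    indepNum (cayley G (derQ G (Subgroup.zpowers x))) = 2 ∧
    Nat.card G = 2 * Nat.card (G ⧸ Subgroup.zpowers x) ∧
    ∃ u v : G ⧸ Subgroup.zpowers x, u ≠ v ∧
      ∃! g : G, g ∈ derQ G (Subgroup.zpowers x) ∧ g • u = v := by
  have hx1 : x ≠ 1 := fun h => hxA (h ▸ A.one_mem)
  have : A.Normal := normal_of_index_eq_two hindex
  have : A.FiniteIndex := ⟨by omega⟩
  have hdisj : Disjoint A (zpowers x) := disjoint_def.mpr fun hg hgx =>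
    (eq_one_or_eq_of_mem_zpowers hx2 hgx).resolve_right (by rintro rfl; exact hxA hg)
  have hAder : ∀ a ∈ A, a ≠ 1 → a ∈ derQ G (zpowers x) :=
    fun _ => mem_derQ_of_mem_of_disjoint hdisj
  refine ⟨?_, ?_, ?_⟩
  · classical
    refine indepNum_eq_of_isIndepSet (s := {1, x}) (isIndepSet_derQ_of_subset ?_)
      (Finset.card_pair hx1.symm) fun t ht => hindex ▸ card_le_index_of_isIndepSet hAder ht
    simp [Set.insert_subset_iff, (zpowers x).one_mem, mem_zpowers x]
  · rw [card_eq_card_quotient_mul_card_subgroup (zpowers x), Nat.card_zpowers,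
      orderOf_eq_prime hx2 hx1, mul_comm]
  · obtain ⟨a, ha, ha2⟩ := hA2
    have hder := hAder _ (pow_mem ha 2) ha2
    refine ⟨((1 : G) : G ⧸ zpowers x), ((a ^ 2 : G) : G ⧸ zpowers x), ?_,
      existsUnique_mem_derQ_smul_eq hx2 (hconj a ha) hder⟩
    simpa [MulAction.Quotient.smul_coe, smul_eq_mul] using (hder ((1 : G) : G ⧸ zpowers x)).symm

/-- Let `A` be a finite abelian group that is not elementary abelian of
exponent 2, and let `G = D(A)` be the generalized dihedral group (presented abstractly:
`A ≤ G` abelian of index 2, `x ∉ A`, `x² = 1`, `xax = a⁻¹` for `a ∈ A`), acting on the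
left cosets of `H = ⟨x⟩`. Then `α(Γ_G) = 2 = |G|/n` (where `n = |G ⧸ H| = |A|` is the
degree, i.e. `|G| = 2n`), so `G` has the EKR property, and there are two distinct cosets
`u ≠ v` such that exactly one derangement of `G` maps `u` to `v`. -/
theorem stmt_8 {G : Type*} [Group G] [Fintype G]
    (A : Subgroup G) (hcomm : ∀ a ∈ A, ∀ b ∈ A, a * b = b * a)
    (hA2 : ∃ a ∈ A, a ^ 2 ≠ 1)
    (x : G) (hx2 : x ^ 2 = 1) (hxA : x ∉ A) (hindex : A.index = 2)
    (hconj : ∀ a ∈ A, x * a * x = a⁻¹) :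
    indepNum (cayley G (derQ G (Subgroup.zpowers x))) = 2 ∧
    Nat.card G = 2 * Nat.card (G ⧸ Subgroup.zpowers x) ∧
    ∃ u v : G ⧸ Subgroup.zpowers x, u ≠ v ∧
      ∃! g : G, g ∈ derQ G (Subgroup.zpowers x) ∧ g • u = v :=
  stmt_8_general A hA2 x hx2 hxA hindex hconj
end

section
/- Let n be even and let A be an abelian group of order n such that, in the degree-n action of G = D(A) on the cosets of H = ⟨x⟩, the subgroup A contains odd permutations (i.e., A is not contained in Alt(n)). Let τ be any derangement in the coset xA. If C is an inverse-closed set of derangements with ((A ∩ Alt(n)) ∪ τ(A ∩ Alt(n))) \ {1} ⊆ C ⊆ Der(G), then α(Cay(G, C)) = 2. -/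
/-!
The graph `Cay(G, C)` has a non-edge `{1, x}`, since `x` fixes the coset `H` and so is not a
derangement; hence `α ≥ 2`. For the upper bound, twist the sign character `φ` of the coset
action by the character of `G / A ≅ C₂` sending the nontrivial coset to `φ τ`. The kernel `S` of
the twisted character `ψ` is exactly `(A ∩ Alt(n)) ∪ τ(A ∩ Alt(n))`, and `S \ {1} ⊆ C`. Among
three vertices `g, h, k`, if neither `g⁻¹h` nor `g⁻¹k` lies in `S` then, `ψ` taking values in
`{±1}`, their quotient `h⁻¹k` does; so no three vertices are pairwise non-adjacent.
-/

section

variable {G : Type*} [Group G]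

open scoped Classical in
noncomputable def Subgroup.indexTwoChar (A : Subgroup G) (hA : A.index = 2) (ε : ℤˣ) :
    G →* ℤˣ where
  toFun g := if g ∈ A then 1 else ε
  map_one' := if_pos A.one_mem
  map_mul' g h := by
    by_cases hg : g ∈ A <;> by_cases hh : h ∈ A <;>
      simp [A.mul_mem_iff_of_index_two hA, hg, hh, Int.units_mul_self]

theorem Subgroup.indexTwoChar_apply_of_mem {A : Subgroup G} (hA : A.index = 2) (ε : ℤˣ) {g : G}
    (hg : g ∈ A) : A.indexTwoChar hA ε g = 1 := by
  classical
  exact if_pos hg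

theorem Subgroup.indexTwoChar_apply_of_notMem {A : Subgroup G} (hA : A.index = 2) (ε : ℤˣ)
    {g : G} (hg : g ∉ A) : A.indexTwoChar hA ε g = ε := by
  classical
  exact if_neg hg

theorem MonoidHom.inv_mul_mem_ker_of_notMem_ker (ψ : G →* ℤˣ) {u v : G} (hu : u ∉ ψ.ker)
    (hv : v ∉ ψ.ker) : u⁻¹ * v ∈ ψ.ker := by
  rw [MonoidHom.mem_ker, ← Ne, Int.units_ne_iff_eq_neg] at hu hv
  rw [MonoidHom.mem_ker, map_mul, map_inv, hu, hv, inv_mul_cancel]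

theorem mem_or_exists_eq_mul_of_mem_ker_mul_indexTwoChar (φ : G →* ℤˣ) {A : Subgroup G}
    (hA : A.index = 2) {τ : G} (hτ : τ ∉ A) {g : G}
    (hg : g ∈ (φ * A.indexTwoChar hA (φ τ)).ker) :
    (g ∈ A ∧ φ g = 1) ∨ ∃ a ∈ A, φ a = 1 ∧ g = τ * a := by
  rw [MonoidHom.mem_ker] at hg
  by_cases hgA : g ∈ A
  · rw [MonoidHom.mul_apply, A.indexTwoChar_apply_of_mem hA _ hgA, mul_one] at hg
    exact Or.inl ⟨hgA, hg⟩
  · rw [MonoidHom.mul_apply, A.indexTwoChar_apply_of_notMem hA _ hgA] at hg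
    refine Or.inr ⟨τ⁻¹ * g, ?_, ?_, by group⟩
    · rw [A.mul_mem_iff_of_index_two hA, A.inv_mem_iff]
      exact iff_of_false hτ hgA
    · rw [map_mul, map_inv, Int.units_inv_eq_self, mul_comm, hg]

theorem notMem_derQ_of_mem {H : Subgroup G} {h : G} (hh : h ∈ H) : h ∉ derQ G H :=
  fun hder => hder (1 : G) (QuotientGroup.eq.mpr (by simpa using H.inv_mem hh))

variable {C : Set G}

theorem cayley_adj_iff (hC : ∀ c ∈ C, c⁻¹ ∈ C) {g h : G} :
    (cayley G C).Adj g h ↔ g ≠ h ∧ g⁻¹ * h ∈ C :=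
  ⟨fun ⟨hne, hgh, _⟩ => ⟨hne, hgh⟩,
    fun ⟨hne, hgh⟩ => ⟨hne, hgh, by simpa using hC _ hgh⟩⟩

theorem isIndepSet_cayley_pair {g : G} (hg : g ∉ C) : IsIndepSet (cayley G C) {1, g} :=
  Set.pairwise_pair.mpr fun _ =>
    ⟨fun ⟨_, h1g, _⟩ => hg (by simpa using h1g), fun ⟨_, _, h1g⟩ => hg (by simpa using h1g)⟩

theorem card_le_two_of_isIndepSet_cayley (hC : ∀ c ∈ C, c⁻¹ ∈ C) (ψ : G →* ℤˣ)
    (hψ : ∀ g ∈ ψ.ker, g ≠ 1 → g ∈ C) {s : Finset G} (hs : IsIndepSet (cayley G C) s) :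
    s.card ≤ 2 := by
  by_contra! hlt
  obtain ⟨g, hg, h, hh, k, hk, hgh, hgk, hhk⟩ := Finset.two_lt_card.mp hlt
  have notMem_ker {p q : G} (hp : p ∈ s) (hq : q ∈ s) (hpq : p ≠ q) : p⁻¹ * q ∉ ψ.ker :=
    fun hker => hs hp hq hpq <| (cayley_adj_iff hC).mpr
      ⟨hpq, hψ _ hker (by rwa [Ne, inv_mul_eq_one])⟩
  apply notMem_ker hh hk hhk
  simpa [mul_assoc] using
    ψ.inv_mul_mem_ker_of_notMem_ker (notMem_ker hg hh hgh) (notMem_ker hg hk hgk)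

theorem indepNum_eq_of_forall_card_le {V : Type*} {X : SimpleGraph V} {k : ℕ}
    (hle : ∀ s : Finset V, IsIndepSet X s → s.card ≤ k)
    (hex : ∃ s : Finset V, IsIndepSet X s ∧ s.card = k) : indepNum X = k :=
  IsGreatest.csSup_eq ⟨hex, by rintro _ ⟨s, hs, rfl⟩; exact hle s hs⟩

end

theorem stmt_14_general {G : Type*} [Group G]
    (A : Subgroup G)
    (x : G) (hxA : x ∉ A) (hindex : A.index = 2)
    [Fintype (G ⧸ Subgroup.zpowers x)] [DecidableEq (G ⧸ Subgroup.zpowers x)]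
    (τ : G) (hτ : x⁻¹ * τ ∈ A)
    (C : Set G) (hCinv : ∀ c ∈ C, c⁻¹ ∈ C)
    (hC1 : ∀ g : G, g ≠ 1 →
      ((g ∈ A ∧ Equiv.Perm.sign (MulAction.toPermHom G (G ⧸ Subgroup.zpowers x) g) = 1) ∨
       (∃ a ∈ A,
          Equiv.Perm.sign (MulAction.toPermHom G (G ⧸ Subgroup.zpowers x) a) = 1 ∧
          g = τ * a)) →
      g ∈ C)
    (hC2 : C ⊆ derQ G (Subgroup.zpowers x)) :
    indepNum (cayley G C) = 2 := by
  classical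
  set φ := Equiv.Perm.sign.comp (MulAction.toPermHom G (G ⧸ Subgroup.zpowers x))
  have hτA : τ ∉ A := fun h => hxA (by simpa using A.mul_mem h (A.inv_mem hτ))
  have hxC : x ∉ C := fun h => notMem_derQ_of_mem (Subgroup.mem_zpowers x) (hC2 h)
  have hx1 : (1 : G) ≠ x := fun h => hxA (h ▸ A.one_mem)
  have hker : ∀ g ∈ (φ * A.indexTwoChar hindex (φ τ)).ker, g ≠ 1 → g ∈ C :=
    fun g hg hg1 => hC1 g hg1 (mem_or_exists_eq_mul_of_mem_ker_mul_indexTwoChar φ hindex hτA hg)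
  exact indepNum_eq_of_forall_card_le
    (fun _ hs => card_le_two_of_isIndepSet_cayley hCinv _ hker hs)
    ⟨{1, x}, by simpa using isIndepSet_cayley_pair hxC, Finset.card_pair hx1⟩

/-- Let `n` be even, `A` abelian of order `n`, and `G = D(A)` (presented
abstractly), acting on the `n` left cosets of `H = ⟨x⟩`; suppose the permutations of the
cosets induced by `A` include odd ones. Let `τ` be any derangement in the coset `xA`.
If `C` is an inverse-closed set of derangements with
`((A ∩ Alt(n)) ∪ τ(A ∩ Alt(n))) \ {1} ⊆ C ⊆ Der(G)`, then `α(Cay(G, C)) = 2`. -/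
theorem stmt_14 {G : Type*} [Group G] [Fintype G]
    (A : Subgroup G) (hcomm : ∀ a ∈ A, ∀ b ∈ A, a * b = b * a)
    (hEven : Even (Nat.card A))
    (x : G) (hx2 : x ^ 2 = 1) (hxA : x ∉ A) (hindex : A.index = 2)
    (hconj : ∀ a ∈ A, x * a * x = a⁻¹)
    [Fintype (G ⧸ Subgroup.zpowers x)] [DecidableEq (G ⧸ Subgroup.zpowers x)]
    (hAodd : ∃ a ∈ A,
      Equiv.Perm.sign (MulAction.toPermHom G (G ⧸ Subgroup.zpowers x) a) = -1)
    (τ : G) (hτ : x⁻¹ * τ ∈ A) (hτder : τ ∈ derQ G (Subgroup.zpowers x))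
    (C : Set G) (hCinv : ∀ c ∈ C, c⁻¹ ∈ C)
    (hC1 : ∀ g : G, g ≠ 1 →
      ((g ∈ A ∧ Equiv.Perm.sign (MulAction.toPermHom G (G ⧸ Subgroup.zpowers x) g) = 1) ∨
       (∃ a ∈ A,
          Equiv.Perm.sign (MulAction.toPermHom G (G ⧸ Subgroup.zpowers x) a) = 1 ∧
          g = τ * a)) →
      g ∈ C)
    (hC2 : C ⊆ derQ G (Subgroup.zpowers x)) :
    indepNum (cayley G C) = 2 :=
  stmt_14_general A x hxA hindex τ hτ C hCinv hC1 hC2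
end

section
/- Let p ≥ 3 be a prime and let D ⊆ Der(Sym(p)) be inverse-closed. If the independence number of Cay(Sym(p), Der(Sym(p)) \ D) is strictly greater than (p−1)!, then D contains at least (p−2)! labels, i.e., |{{d, d⁻¹} : d ∈ D}| ≥ (p−2)!. -/
/-- The set of derangements of `Sym(p)`: the permutations without fixed points. -/
def derSym (p : ℕ) : Set (Equiv.Perm (Fin p)) := {σ | ∀ i, σ i ≠ i}

/-!
Let `s` be an independent set of `Cay(Sym(p), Der(Sym(p)) \ D)` with more than `(p−1)!` elements,
and let `P` be a subgroup of order `p`. Since `P` has index `(p−1)!`, two elements `a ≠ b` of `s`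
lie in one left coset of `P`, so `a⁻¹b` or `b⁻¹a` is a nontrivial element of `P` outside
`Der(Sym(p)) \ D`. Nontrivial elements of `P` are `p`-cycles, hence derangements, so `P` meets `D`
in some `d` and `P = ⟨d⟩` is the subgroup generated by the label `{d, d⁻¹}`. Since there are
`(p−1)!` `p`-cycles and each subgroup of order `p` contains `p − 1` of them, there are `(p−2)!`
such subgroups, and so at least as many labels.
-/

open Equiv Finset Subgroup

section Cayley

variable {V : Type*}

lemma exists_isIndepSet_card_eq_indepNum [Finite V] (X : SimpleGraph V) :
    ∃ s : Finset V, IsIndepSet X s ∧ s.card = indepNum X := by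
  have := Fintype.ofFinite V
  refine Nat.sSup_mem (s := {k | ∃ s : Finset V, IsIndepSet X s ∧ s.card = k})
    ⟨0, ∅, by simp [IsIndepSet], rfl⟩ ⟨Fintype.card V, ?_⟩
  rintro _ ⟨s, -, rfl⟩
  exact s.card_le_univ

variable {G : Type*} [Group G]

/-- Two vertices of an independent set in the same left coset of `H` produce a nontrivial element
of `H` outside the connection set. -/
lemma exists_ne_one_notMem_of_index_lt_indepNum [Finite G] {C : Set G} {H : Subgroup G}
    (h : H.index < indepNum (cayley G C)) : ∃ g ∈ H, g ≠ 1 ∧ g ∉ C := by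
  obtain ⟨s, hs, hcard⟩ := exists_isIndepSet_card_eq_indepNum (cayley G C)
  have := Fintype.ofFinite (G ⧸ H)
  obtain ⟨a, ha, b, hb, hab, hcoset⟩ := s.exists_ne_map_eq_of_card_lt_of_maps_to
    (t := Finset.univ) (f := ((↑) : G → G ⧸ H)) (by
      rw [card_univ, ← Nat.card_eq_fintype_card, ← H.index_eq_card, hcard]; exact h)
    (fun _ _ => mem_coe.2 (mem_univ _))
  have hmem : a⁻¹ * b ∈ H := QuotientGroup.eq.mp hcoset
  have hne : a⁻¹ * b ≠ 1 := fun e => hab (inv_mul_eq_one.mp e)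
  have hnadj : ¬ (a⁻¹ * b ∈ C ∧ b⁻¹ * a ∈ C) := fun hC => hs ha hb hab ⟨hab, hC⟩
  by_cases hC : a⁻¹ * b ∈ C
  · refine ⟨b⁻¹ * a, ?_, ?_, fun h' => hnadj ⟨hC, h'⟩⟩
    · simpa using H.inv_mem hmem
    · simpa using inv_ne_one.mpr hne
  · exact ⟨a⁻¹ * b, hmem, hne, hC⟩

end Cayley

section ZPowers

variable {G : Type*} [Group G]

lemma Subgroup.zpowers_eq_zpowers_of_mem {p : ℕ} (hp : p.Prime) {g h : G} (hg : orderOf g = p)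
    (hh : h ∈ zpowers g) (hh1 : h ≠ 1) : zpowers h = zpowers g := by
  have hfin : Finite (zpowers g) := Nat.finite_of_card_ne_zero (by simp [hg, hp.ne_zero])
  refine eq_of_le_of_card_ge (zpowers_le.mpr hh) ?_
  have hdvd : orderOf h ∣ p := hg ▸ orderOf_dvd_of_mem_zpowers hh
  simp only [Nat.card_zpowers, hg]
  exact ((hp.eq_one_or_self_of_dvd _ hdvd).resolve_left (mt orderOf_eq_one_iff.mp hh1)).ge

lemma Subgroup.closure_pair_inv (g : G) : closure {g, g⁻¹} = zpowers g :=
  le_antisymm ((closure_le _).mpr (by simp [Set.insert_subset_iff, mem_zpowers]))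
    (zpowers_le.mpr (subset_closure (Set.mem_insert _ _)))

/-- Each cyclic subgroup of order `n` contains at most `n - 1` of its generators. -/
lemma Finset.card_le_mul_card_image_zpowers [DecidableEq (Subgroup G)] {n : ℕ} (hn : 1 < n)
    (s : Finset G) (hs : ∀ g ∈ s, orderOf g = n) : #s ≤ (n - 1) * #(s.image zpowers) := by
  refine card_le_mul_card_image s _ fun H hH => ?_
  obtain ⟨g, hg, rfl⟩ := mem_image.mp hH
  have hfin : (zpowers g : Set G).Finite := by
    apply Set.finite_of_ncard_pos
    rw [← Nat.card_coe_set_eq, SetLike.coe_sort_coe, Nat.card_zpowers, hs g hg]; omega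
  have hfiber : (↑({x ∈ s | zpowers x = zpowers g}) : Set G) ⊆ (zpowers g : Set G) \ {1} := by
    intro x hx
    obtain ⟨hxs, hx⟩ := mem_filter.mp (mem_coe.mp hx)
    refine ⟨hx ▸ mem_zpowers x, fun h1 => ?_⟩
    have hx1 := hs x hxs
    rw [Set.mem_singleton_iff.mp h1, orderOf_one] at hx1
    omega
  calc #{x ∈ s | zpowers x = zpowers g}
      = (↑({x ∈ s | zpowers x = zpowers g}) : Set G).ncard := (Set.ncard_coe_finset _).symm
    _ ≤ ((zpowers g : Set G) \ {1}).ncard := Set.ncard_le_ncard hfiber hfin.sdiff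
    _ = n - 1 := by
      rw [Set.ncard_sdiff_singleton_of_mem (one_mem _), ← Nat.card_coe_set_eq,
        SetLike.coe_sort_coe, Nat.card_zpowers, hs g hg]

end ZPowers

namespace Equiv.Perm

variable {α : Type*} [Fintype α] {σ : Perm α}

lemma index_zpowers_of_orderOf_eq_card (hσ : orderOf σ = Fintype.card α) :
    (zpowers σ).index = (Fintype.card α - 1).factorial := by
  have hpos : 0 < Fintype.card α := hσ ▸ orderOf_pos σ
  have h := (zpowers σ).index_mul_card
  rw [Nat.card_zpowers, hσ, Nat.card_perm, Nat.card_eq_fintype_card,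
    ← Nat.mul_factorial_pred hpos.ne', mul_comm] at h
  exact Nat.eq_of_mul_eq_mul_left hpos h

variable [DecidableEq α]

lemma cycleType_eq_singleton_of_orderOf_eq_card (hp : (Fintype.card α).Prime)
    (hσ : orderOf σ = Fintype.card α) : σ.cycleType = {Fintype.card α} := by
  have hc := isCycle_of_prime_order'' hp hσ
  rw [hc.cycleType, ← hc.orderOf, hσ]

lemma orderOf_eq_card_iff_cycleType_eq_singleton (hp : (Fintype.card α).Prime) :
    orderOf σ = Fintype.card α ↔ σ.cycleType = {Fintype.card α} :=
  ⟨cycleType_eq_singleton_of_orderOf_eq_card hp, fun h => by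
    rw [← lcm_cycleType, h, Multiset.lcm_singleton, normalize_eq]⟩

lemma support_eq_univ_of_orderOf_eq_card (hp : (Fintype.card α).Prime)
    (hσ : orderOf σ = Fintype.card α) : σ.support = Finset.univ := by
  apply Finset.eq_univ_of_card
  rw [← sum_cycleType, cycleType_eq_singleton_of_orderOf_eq_card hp hσ, Multiset.sum_singleton]

lemma card_filter_orderOf_eq_card (hp : (Fintype.card α).Prime) :
    #{σ : Perm α | orderOf σ = Fintype.card α} = (Fintype.card α - 1).factorial := by
  simp_rw [orderOf_eq_card_iff_cycleType_eq_singleton hp]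
  rw [card_of_cycleType_singleton hp.two_le le_rfl, Nat.choose_self, mul_one]

end Equiv.Perm

lemma exists_mem_zpowers_eq_of_factorial_lt_indepNum {p : ℕ} (hp : p.Prime)
    {D : Set (Perm (Fin p))}
    (h : (p - 1).factorial < indepNum (cayley (Perm (Fin p)) (derSym p \ D)))
    {σ : Perm (Fin p)} (hσ : orderOf σ = p) : ∃ d ∈ D, zpowers d = zpowers σ := by
  have hp' : (Fintype.card (Fin p)).Prime := by rwa [Fintype.card_fin]
  replace hσ : orderOf σ = Fintype.card (Fin p) := by rwa [Fintype.card_fin]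
  have hindex : (zpowers σ).index < indepNum (cayley _ (derSym p \ D)) := by
    rwa [Perm.index_zpowers_of_orderOf_eq_card hσ, Fintype.card_fin]
  obtain ⟨d, hdσ, hd1, hdC⟩ := exists_ne_one_notMem_of_index_lt_indepNum hindex
  have hzd := zpowers_eq_zpowers_of_mem hp' hσ hdσ hd1
  have hder : d ∈ derSym p := fun i => Perm.mem_support.mp <| by
    rw [Perm.support_eq_univ_of_orderOf_eq_card hp'
      (by rw [← Nat.card_zpowers, hzd, Nat.card_zpowers, hσ])]
    exact mem_univ i
  exact ⟨d, by_contra fun hdD => hdC ⟨hder, hdD⟩, hzd⟩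

theorem stmt_19_general (p : ℕ) (hp : p.Prime)
    (D : Set (Equiv.Perm (Fin p)))
    (h : (p - 1).factorial <
      indepNum (cayley (Equiv.Perm (Fin p)) (derSym p \ D))) :
    (p - 2).factorial ≤
      {s : Set (Equiv.Perm (Fin p)) | ∃ d ∈ D, s = {d, d⁻¹}}.ncard := by
  classical
  set labels := {s : Set (Perm (Fin p)) | ∃ d ∈ D, s = {d, d⁻¹}}
  set cycles : Finset (Perm (Fin p)) := {σ | orderOf σ = p}
  have hcycles : ∀ σ ∈ cycles, orderOf σ = p := fun σ hσ => (mem_filter.mp hσ).2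
  have hcard : #cycles = (p - 1).factorial := by
    simpa using Perm.card_filter_orderOf_eq_card (α := Fin p) (by rwa [Fintype.card_fin])
  have hcovered : ↑(cycles.image zpowers) ⊆ Subgroup.closure '' labels := by
    simp only [coe_image, Set.image_subset_iff]
    intro σ hσ
    obtain ⟨d, hdD, hdσ⟩ := exists_mem_zpowers_eq_of_factorial_lt_indepNum hp h (hcycles σ hσ)
    exact ⟨{d, d⁻¹}, ⟨d, hdD, rfl⟩, by rw [closure_pair_inv, hdσ]⟩
  have hsubgroups : #(cycles.image zpowers) ≤ labels.ncard := calc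
    #(cycles.image zpowers) ≤ (Subgroup.closure '' labels).ncard := by
      rw [← Set.ncard_coe_finset]; exact Set.ncard_le_ncard hcovered
    _ ≤ labels.ncard := Set.ncard_image_le
  have hfact : (p - 1) * (p - 2).factorial = (p - 1).factorial := by
    rw [← Nat.mul_factorial_pred (by have := hp.two_le; omega : p - 1 ≠ 0)]; rfl
  refine Nat.le_of_mul_le_mul_left ?_ (Nat.sub_pos_of_lt hp.one_lt)
  calc (p - 1) * (p - 2).factorial = #cycles := by rw [hfact, hcard]
    _ ≤ (p - 1) * #(cycles.image zpowers) := card_le_mul_card_image_zpowers hp.one_lt _ hcycles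
    _ ≤ (p - 1) * labels.ncard := Nat.mul_le_mul_left _ hsubgroups

/-- Let `p ≥ 3` be prime and `D ⊆ Der(Sym(p))` inverse-closed. If the
independence number of `Cay(Sym(p), Der(Sym(p)) \ D)` exceeds `(p−1)!`, then `D` contains
at least `(p−2)!` labels, i.e. at least `(p−2)!` distinct sets of the form `{d, d⁻¹}`. -/
theorem stmt_19 (p : ℕ) (hp : p.Prime) (hp3 : 3 ≤ p)
    (D : Set (Equiv.Perm (Fin p))) (hD : D ⊆ derSym p)
    (hDinv : ∀ d ∈ D, d⁻¹ ∈ D)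
    (h : (p - 1).factorial <
      indepNum (cayley (Equiv.Perm (Fin p)) (derSym p \ D))) :
    (p - 2).factorial ≤
      {s : Set (Equiv.Perm (Fin p)) | ∃ d ∈ D, s = {d, d⁻¹}}.ncard :=
  stmt_19_general p hp D h
end
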